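/- Let p = 6m−1 ≥ 11 be prime and n ≥ 1. Every set A ⊆ [2m−1, 4m−1] × 𝔽_p^{n−1} that belongs to SF₁(𝔽_p^n) and has size |A| ≥ (2m−1)·p^{n−1} is structured. -/

import Mathlib

open Pointwise

/-- A set in an additive group is sum-free if `x + y = z` has no solution in it. -/
def IsSumFree {G : Type*} [AddCommGroup G] (A : Set G) : Prop :=
  ∀ x ∈ A, ∀ y ∈ A, x + y ∉ A

/-- Two subsets (of possibly two isomorphic groups) are isomorphic if some additive
isomorphism maps one onto the other. -/
def IsoSets {G H : Type*} [AddCommGroup G] [AddCommGroup H] (A : Set G) (B : Set H) : Prop :=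
  ∃ e : G ≃+ H, e '' A = B

/-- The hierarchy `SF k G`: `SF 0` consists of all sum-free sets and `SF (k+1)` of those
members of `SF k` contained in no member of `SF k` of maximum size. -/
noncomputable def SF (G : Type*) [AddCommGroup G] [Fintype G] : ℕ → Set (Set G)
  | 0 => {A | IsSumFree A}
  | k + 1 =>
      {A | A ∈ SF G k ∧
        ¬ ∃ B ∈ SF G k, B.ncard = sSup (Set.ncard '' SF G k) ∧ A ⊆ B}

/-- `sf k G` is the maximum size of a member of `SF k G` (zero if `SF k G` is empty). -/
noncomputable def sf (G : Type*) [AddCommGroup G] [Fintype G] (k : ℕ) : ℕ :=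
  sSup (Set.ncard '' SF G k)

/-- The members of `SF k G` of maximum size. -/
noncomputable def SFmax (G : Type*) [AddCommGroup G] [Fintype G] (k : ℕ) : Set (Set G) :=
  {A | A ∈ SF G k ∧ A.ncard = sf G k}

/-- The set of residues mod `p` of the integers from `a` to `b`. -/
def Ival (p a b : ℕ) : Set (ZMod p) :=
  (fun i : ℕ => (i : ZMod p)) '' Set.Icc a b

/-- The model very structured set in `𝔽_p × 𝔽_p^d` associated with `P ⊆ 𝔽_p^d`,
for `p = 6m - 1`. -/
def VSModel (p m d : ℕ) (P : Set (Fin d → ZMod p)) : Set (ZMod p × (Fin d → ZMod p)) :=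
  {(((2*m-1 : ℕ) : ZMod p), (0 : Fin d → ZMod p))} ∪
  ({((2*m : ℕ) : ZMod p)} ×ˢ Pᶜ) ∪
  ((Ival p (2*m+1) (4*m-3)) ×ˢ (Set.univ : Set (Fin d → ZMod p))) ∪
  ({((4*m-2 : ℕ) : ZMod p)} ×ˢ ({(0 : Fin d → ZMod p)}ᶜ)) ∪
  ({((4*m-1 : ℕ) : ZMod p)} ×ˢ P)

/-- `B ⊆ 𝔽_p^ℓ` is very structured if for some `P ⊆ 𝔽_p^{ℓ-1}` with `0 ∉ P + P` it is
isomorphic to the model set. -/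
def IsVeryStructured (p m ℓ : ℕ) (B : Set (Fin ℓ → ZMod p)) : Prop :=
  ∃ P : Set (Fin (ℓ - 1) → ZMod p),
    (0 : Fin (ℓ - 1) → ZMod p) ∉ P + P ∧ IsoSets B (VSModel p m (ℓ - 1) P)

/-- `A ⊆ 𝔽_p^n` is structured if it is isomorphic to `B × 𝔽_p^{n-ℓ}` for some `1 ≤ ℓ ≤ n`
and a very structured `B ⊆ 𝔽_p^ℓ`. -/
def IsStructured (p m n : ℕ) {G : Type*} [AddCommGroup G] (A : Set G) : Prop :=
  ∃ ℓ : ℕ, 1 ≤ ℓ ∧ ℓ ≤ n ∧ ∃ B : Set (Fin ℓ → ZMod p),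
    IsVeryStructured p m ℓ B ∧
    IsoSets A (B ×ˢ (Set.univ : Set (Fin (n - ℓ) → ZMod p)))


section Mann

variable {G : Type*} [AddCommGroup G] [Fintype G] [DecidableEq G]

lemma mann_aux (d : ℕ) (hG : ∀ H : AddSubgroup G, H ≠ ⊤ → Nat.card H ≤ d) :
    ∀ k (A B : Finset G), B.card ≤ k → A.Nonempty → B.Nonempty →
      (A + B = Finset.univ ∨ A.card + B.card ≤ (A + B).card + d) := by
  intro k
  induction k with
  | zero =>
    intro A B hk _ hB
    exact absurd (Finset.card_eq_zero.mp (Nat.le_zero.mp hk)) (Finset.nonempty_iff_ne_empty.mp hB)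
  | succ k ih =>
    intro A B hk hA hB
    by_cases hsat : ∀ a ∈ A, ∀ b ∈ B, ∀ b' ∈ B, b' + (a - b) ∈ A
    · -- saturated case
      obtain ⟨b₀, hb₀⟩ := hB
      set H := AddSubgroup.closure ((B : Set G) - (B : Set G)) with hH
      have hQ : ∀ h, h ∈ H → ∀ a ∈ A, a + h ∈ A := by
        intro h hh
        induction hh using AddSubgroup.closure_induction with
        | mem x hx =>
          obtain ⟨b, hb, b', hb', rfl⟩ := Set.mem_sub.mp hx
          intro a ha
          have := hsat a ha b' (by simpa using hb') b (by simpa using hb)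
          convert this using 1
          abel
        | zero => intro a ha; simpa using ha
        | add x y hx hy qx qy =>
          intro a ha
          have : a + x + y ∈ A := qy _ (qx a ha)
          convert this using 1; abel
        | neg x hx qx =>
          intro a ha
          have himg : A.image (· + x) = A := by
            apply Finset.eq_of_subset_of_card_le
            · intro y hy
              obtain ⟨a', ha', rfl⟩ := Finset.mem_image.mp hy
              exact qx a' ha'
            · rw [Finset.card_image_of_injective _ (add_left_injective x)]
          have : a ∈ A.image (· + x) := by rw [himg]; exact ha
          obtain ⟨a', ha', haa⟩ := Finset.mem_image.mp this
          have : a + -x = a' := by rw [← haa]; abel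
          rwa [this]
      have hBH : ∀ b ∈ B, b - b₀ ∈ H := fun b hb =>
        AddSubgroup.subset_closure (Set.sub_mem_sub (by simpa using hb) (by simpa using hb₀))
      by_cases hT : H = ⊤
      · left
        obtain ⟨a₀, ha₀⟩ := hA
        have hAuniv : ∀ g : G, g ∈ A := by
          intro g
          have := hQ (g - a₀) (by rw [hT]; trivial) a₀ ha₀
          simpa using this
        ext g
        simp only [Finset.mem_univ, iff_true]
        exact Finset.mem_add.mpr ⟨g - b₀, hAuniv _, b₀, hb₀, by abel⟩
      · right
        have h1 : A + B = A.image (· + b₀) := by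
          apply Finset.Subset.antisymm
          · intro x hx
            obtain ⟨a, ha, b, hb, rfl⟩ := Finset.mem_add.mp hx
            exact Finset.mem_image.mpr ⟨a + (b - b₀), hQ _ (hBH b hb) a ha, by abel⟩
          · intro x hx
            obtain ⟨a, ha, rfl⟩ := Finset.mem_image.mp hx
            exact Finset.add_mem_add ha hb₀
        have h2 : B.card ≤ d := by
          classical
          have hNc : Nat.card H = (H : Set G).toFinset.card := by
            rw [← SetLike.coe_sort_coe, Nat.card_coe_set_eq, Set.ncard_eq_toFinset_card']
          have hsub : B.image (· - b₀) ⊆ (H : Set G).toFinset := by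
            intro x hx
            obtain ⟨b, hb, rfl⟩ := Finset.mem_image.mp hx
            simpa using hBH b hb
          calc B.card = (B.image (· - b₀)).card :=
                (Finset.card_image_of_injective _ sub_left_injective).symm
            _ ≤ (H : Set G).toFinset.card := Finset.card_le_card hsub
            _ = Nat.card H := hNc.symm
            _ ≤ d := hG H hT
        have h3 : (A + B).card = A.card := by
          rw [h1, Finset.card_image_of_injective _ (add_left_injective b₀)]
        omega
    · -- transform case
      push_neg at hsat
      obtain ⟨a, ha, b, hb, b', hb', hnb⟩ := hsat
      set e := a - b with he
      set B' := B.filter (fun x => x + e ∈ A) with hB'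
      set A' := A ∪ B.image (· + e) with hA'
      have hbe : b + e = a := by rw [he]; abel
      have hbB' : b ∈ B' := by
        rw [hB', Finset.mem_filter, hbe]
        exact ⟨hb, ha⟩
      have hb'B' : b' ∉ B' := by
        rw [hB', Finset.mem_filter]
        exact fun h => hnb h.2
      have hssub : B' ⊂ B := ⟨Finset.filter_subset _ _, fun h => hb'B' (h hb')⟩
      have hinter : A ∩ B.image (· + e) = B'.image (· + e) := by
        ext x
        simp only [Finset.mem_inter, Finset.mem_image, hB', Finset.mem_filter]
        aesop
      have hcards : A'.card + B'.card = A.card + B.card := by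
        have h1 := Finset.card_union_add_card_inter A (B.image (· + e))
        rw [hinter] at h1
        have hc1 : (B.image (· + e)).card = B.card :=
          Finset.card_image_of_injective _ (add_left_injective e)
        have hc2 : (B'.image (· + e)).card = B'.card :=
          Finset.card_image_of_injective _ (add_left_injective e)
        rw [hc2, hc1] at h1
        rw [hA']
        omega
      have hABsub : A' + B' ⊆ A + B := by
        intro x hx
        obtain ⟨u, hu, v, hv, rfl⟩ := Finset.mem_add.mp hx
        rw [hB', Finset.mem_filter] at hv
        rw [hA', Finset.mem_union] at hu
        rcases hu with hu | hu
        · exact Finset.add_mem_add hu hv.1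
        · obtain ⟨b'', hb'', rfl⟩ := Finset.mem_image.mp hu
          have : b'' + e + v = (v + e) + b'' := by abel
          rw [this]
          exact Finset.add_mem_add hv.2 hb''
      have hrec := ih A' B' (by have := Finset.card_lt_card hssub; omega)
        (hA.mono Finset.subset_union_left) ⟨b, hbB'⟩
      rcases hrec with h | h
      · left
        apply Finset.eq_univ_of_forall
        intro g
        exact hABsub (h ▸ Finset.mem_univ g)
      · right
        have := Finset.card_le_card hABsub
        omega

lemma sumfree_card_bound (d : ℕ) (hG : ∀ H : AddSubgroup G, H ≠ ⊤ → Nat.card H ≤ d)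
    {A : Set G} (hA : IsSumFree A) : 3 * A.ncard ≤ Fintype.card G + d := by
  classical
  rcases A.eq_empty_or_nonempty with rfl | hne
  · simp
  set Af := A.toFinset with hAf
  have hAfne : Af.Nonempty := by rwa [hAf, Set.toFinset_nonempty]
  have hdisj : ∀ x ∈ Af + Af, x ∉ Af := by
    intro x hx hxA
    obtain ⟨u, hu, v, hv, rfl⟩ := Finset.mem_add.mp hx
    exact hA u (by simpa [hAf] using hu) v (by simpa [hAf] using hv) (by simpa [hAf] using hxA)
  rcases mann_aux d hG Af.card Af Af le_rfl hAfne hAfne with h | h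
  · exfalso
    obtain ⟨a, haA⟩ := hAfne
    exact hdisj a (h ▸ Finset.mem_univ a) haA
  · have h2 : (Af + Af).card ≤ Fintype.card G - Af.card := by
      have hsub : Af + Af ⊆ Finset.univ \ Af := fun x hx =>
        Finset.mem_sdiff.mpr ⟨Finset.mem_univ x, hdisj x hx⟩
      calc (Af + Af).card ≤ (Finset.univ \ Af).card := Finset.card_le_card hsub
        _ = Fintype.card G - Af.card := by
          rw [Finset.card_sdiff_of_subset (Finset.subset_univ _), Finset.card_univ]
    have hle : Af.card ≤ Fintype.card G := Finset.card_le_univ _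
    have hnc : A.ncard = Af.card := Set.ncard_eq_toFinset_card' A
    omega

end Mann

lemma subgroup_card_le {G : Type*} [AddCommGroup G] [Fintype G] {p n : ℕ} (hp : p.Prime)
    (hcard : Fintype.card G = p ^ n) (H : AddSubgroup G) (hH : H ≠ ⊤) :
    Nat.card H ≤ p ^ (n - 1) := by
  have hdvd : Nat.card H ∣ p ^ n := by
    have := AddSubgroup.card_addSubgroup_dvd_card H
    rwa [Nat.card_eq_fintype_card (α := G), hcard] at this
  obtain ⟨k, hk, hkH⟩ := (Nat.dvd_prime_pow hp).mp hdvd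
  rcases eq_or_lt_of_le hk with rfl | hlt
  · exfalso
    apply hH
    apply AddSubgroup.eq_top_of_card_eq
    rw [hkH, Nat.card_eq_fintype_card, hcard]
  · rw [hkH]
    exact Nat.pow_le_pow_right hp.pos (by omega)



section Helpers

lemma ncard_biUnion_le' {α : Type*} [Fintype α] {ι : Type*} (s : Finset ι) (f : ι → Set α) :
    (⋃ i ∈ s, f i).ncard ≤ ∑ i ∈ s, (f i).ncard := by
  classical
  induction s using Finset.induction_on with
  | empty => simp
  | insert _ _ ha ih =>
    rw [Finset.set_biUnion_insert, Finset.sum_insert ha]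
    exact (Set.ncard_union_le _ _).trans (Nat.add_le_add_left ih _)

lemma ncard_singleton_prod' {α β : Type*} (a : α) (t : Set β) :
    ({a} ×ˢ t).ncard = t.ncard := by
  rw [Set.singleton_prod, Set.ncard_image_of_injective _ (Prod.mk_right_injective a)]

lemma ncard_prod' {α β : Type*} (s : Set α) (t : Set β) :
    (s ×ˢ t).ncard = s.ncard * t.ncard := by
  rw [← Nat.card_coe_set_eq, ← Nat.card_coe_set_eq, ← Nat.card_coe_set_eq,
    ← Nat.card_prod]
  exact Nat.card_congr (Equiv.Set.prod s t)

/-- The shear `(c, v) ↦ (c, v - c • s)` as an additive equivalence. -/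
def shearEquiv {K : Type*} [CommRing K] {V : Type*} [AddCommGroup V] [Module K V] (s : V) :
    (K × V) ≃+ (K × V) where
  toFun g := (g.1, g.2 - g.1 • s)
  invFun g := (g.1, g.2 + g.1 • s)
  left_inv g := by simp
  right_inv g := by simp
  map_add' g h := by
    have : (g.1 + h.1) • s = g.1 • s + h.1 • s := add_smul _ _ _
    refine Prod.ext rfl ?_
    show g.2 + h.2 - (g.1 + h.1) • s = (g.2 - g.1 • s) + (h.2 - h.1 • s)
    rw [this]; abel

lemma shearEquiv_apply {K : Type*} [CommRing K] {V : Type*} [AddCommGroup V] [Module K V]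
    (s : V) (g : K × V) : shearEquiv s g = (g.1, g.2 - g.1 • s) := rfl

lemma shearEquiv_image_singleton {K : Type*} [CommRing K] {V : Type*} [AddCommGroup V]
    [Module K V] (s : V) (c : K) (Sv : Set V) :
    shearEquiv s '' ({c} ×ˢ Sv) = {c} ×ˢ ((fun v => v - c • s) '' Sv) := by
  ext g
  simp only [Set.mem_image, Set.mem_prod, Set.mem_singleton_iff, shearEquiv_apply]
  constructor
  · rintro ⟨⟨c', v⟩, ⟨rfl, hv⟩, rfl⟩
    exact ⟨rfl, v, hv, rfl⟩
  · rintro ⟨h1, v, hv, h2⟩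
    exact ⟨(c, v), ⟨rfl, hv⟩, Prod.ext h1.symm h2⟩

lemma shearEquiv_image_full {K : Type*} [CommRing K] {V : Type*} [AddCommGroup V]
    [Module K V] (s : V) (Sk : Set K) :
    shearEquiv s '' (Sk ×ˢ (Set.univ : Set V)) = Sk ×ˢ (Set.univ : Set V) := by
  ext g
  simp only [Set.mem_image, Set.mem_prod, Set.mem_univ, and_true, shearEquiv_apply]
  constructor
  · rintro ⟨⟨c, v⟩, hc, rfl⟩
    exact hc
  · intro hg
    exact ⟨(g.1, g.2 + g.1 • s), hg, Prod.ext rfl (by dsimp only; abel)⟩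

lemma prodCongr_image_prod' {M N M' N' : Type*} [AddZeroClass M] [AddZeroClass N]
    [AddZeroClass M'] [AddZeroClass N'] (e : M ≃+ M') (f : N ≃+ N') (s : Set M) (t : Set N) :
    (AddEquiv.prodCongr e f) '' (s ×ˢ t) = (e '' s) ×ˢ (f '' t) := by
  ext g
  constructor
  · rintro ⟨⟨u, v⟩, ⟨hu, hv⟩, rfl⟩
    exact ⟨⟨u, hu, rfl⟩, ⟨v, hv, rfl⟩⟩
  · rintro ⟨⟨u, hu, ha⟩, ⟨v, hv, hb⟩⟩
    exact ⟨(u, v), ⟨hu, hv⟩, Prod.ext ha hb⟩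

lemma prodAssocSymm_image {M N P : Type*} [AddZeroClass M] [AddZeroClass N] [AddZeroClass P]
    (s : Set M) (t : Set N) (u : Set P) :
    (AddEquiv.prodAssoc (M := M) (N := N) (P := P)).symm '' (s ×ˢ (t ×ˢ u)) =
      (s ×ˢ t) ×ˢ u := by
  ext g
  constructor
  · rintro ⟨⟨x, ⟨y, z⟩⟩, ⟨hx, hy, hz⟩, rfl⟩
    exact ⟨⟨hx, hy⟩, hz⟩
  · rintro ⟨⟨ha, hb⟩, hc⟩
    exact ⟨(g.1.1, (g.1.2, g.2)), ⟨ha, hb, hc⟩, rfl⟩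

end Helpers

set_option maxHeartbeats 2000000 in
/-- for a prime `p = 6m-1 ≥ 11` and `n ≥ 1`, every
`A ⊆ [2m-1, 4m-1] × 𝔽_p^{n-1}` belonging to `SF₁(𝔽_p^n)` of size at least
`(2m-1)·p^{n-1}` is structured. -/
theorem stmt_10 (p m n : ℕ) [NeZero p] (hp : p.Prime) (hp11 : 11 ≤ p)
    (hpm : p = 6 * m - 1) (hn : 1 ≤ n)
    (A : Set (ZMod p × (Fin (n - 1) → ZMod p)))
    (hsub : A ⊆ (Ival p (2 * m - 1) (4 * m - 1)) ×ˢ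
      (Set.univ : Set (Fin (n - 1) → ZMod p)))
    (hA : A ∈ SF (ZMod p × (Fin (n - 1) → ZMod p)) 1)
    (hcard : (2 * m - 1) * p ^ (n - 1) ≤ A.ncard) :
    IsStructured p m n A := by
  classical
  haveI : Fact (Nat.Prime p) := ⟨hp⟩
  have hm2 : 2 ≤ m := by omega
  -- cardinalities
  have hpn : p * p ^ (n - 1) = p ^ n := by
    conv_rhs => rw [show n = (n - 1) + 1 by omega]
    rw [pow_succ]; ring
  have hcardG : Fintype.card (ZMod p × (Fin (n - 1) → ZMod p)) = p ^ n := by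
    rw [Fintype.card_prod, ZMod.card, Fintype.card_fun, ZMod.card, Fintype.card_fin, hpn]
  have hNV : (Set.univ : Set (Fin (n - 1) → ZMod p)).ncard = p ^ (n - 1) := by
    rw [Set.ncard_univ, Nat.card_eq_fintype_card, Fintype.card_fun, ZMod.card, Fintype.card_fin]
  -- the Green-Ruzsa type bound
  have hbound : ∀ C : Set (ZMod p × (Fin (n - 1) → ZMod p)), IsSumFree C →
      C.ncard ≤ 2 * m * p ^ (n - 1) := by
    intro C hC
    have h3 := sumfree_card_bound (p ^ (n - 1))
      (fun H hH => subgroup_card_le hp hcardG H hH) hC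
    have h4 : p ^ n + p ^ (n - 1) = 3 * (2 * m * p ^ (n - 1)) := by
      calc p ^ n + p ^ (n - 1) = (p + 1) * p ^ (n - 1) := by rw [← hpn]; ring
        _ = 3 * (2 * m * p ^ (n - 1)) := by rw [show p + 1 = 6 * m by omega]; ring
    omega
  have hA0 : IsSumFree A := hA.1
  have hAmax := hA.2
  -- cast arithmetic helpers
  have hcastinj : ∀ a b : ℕ, a < p → b < p → ((a : ZMod p) = (b : ZMod p)) → a = b := by
    intro a b ha hb h
    have h2 := (ZMod.natCast_eq_natCast_iff a b p).mp h
    rwa [Nat.ModEq, Nat.mod_eq_of_lt ha, Nat.mod_eq_of_lt hb] at h2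
  -- B₀, the maximum-size sum-free set
  set B₀ : Set (ZMod p × (Fin (n - 1) → ZMod p)) :=
    (Ival p (2 * m) (4 * m - 1)) ×ˢ Set.univ with hB₀def
  have hB₀sf : IsSumFree B₀ := by
    rintro x hx y hy hxy
    obtain ⟨a, ha, hax⟩ := hx.1
    obtain ⟨b, hb, hby⟩ := hy.1
    obtain ⟨c, hc, hcs⟩ := hxy.1
    rw [Set.mem_Icc] at ha hb hc
    have hax' : (a : ZMod p) = x.1 := hax
    have hby' : (b : ZMod p) = y.1 := hby
    have hcs' : (c : ZMod p) = (x + y).1 := hcs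
    have hsum : ((a + b : ℕ) : ZMod p) = (c : ZMod p) := by
      push_cast
      rw [hax', hby', hcs', Prod.fst_add]
    have hmod := (ZMod.natCast_eq_natCast_iff _ _ _).mp hsum.symm
    have hdvd : p ∣ (a + b) - c := (Nat.modEq_iff_dvd' (by omega)).mp hmod
    have hle := Nat.le_of_dvd (by omega) hdvd
    omega
  have hB₀card : B₀.ncard = 2 * m * p ^ (n - 1) := by
    rw [hB₀def, ncard_prod', hNV]
    have h1 : (Ival p (2 * m) (4 * m - 1)).ncard = 2 * m := by
      rw [Ival, Set.ncard_image_of_injOn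
        (fun a ha b hb hab => hcastinj a b
          (by rw [Set.mem_Icc] at ha; omega) (by rw [Set.mem_Icc] at hb; omega) hab)]
      rw [← Finset.coe_Icc, Set.ncard_coe_finset, Nat.card_Icc]
      omega
    rw [h1]
  have hB₀mem : B₀ ∈ SF (ZMod p × (Fin (n - 1) → ZMod p)) 0 := hB₀sf
  -- the value of sf₀
  have hsf0 : sSup (Set.ncard '' SF (ZMod p × (Fin (n - 1) → ZMod p)) 0) =
      2 * m * p ^ (n - 1) := by
    have hub : ∀ x ∈ Set.ncard '' SF (ZMod p × (Fin (n - 1) → ZMod p)) 0,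
        x ≤ 2 * m * p ^ (n - 1) := by
      rintro x ⟨C, hC, rfl⟩
      exact hbound C hC
    have hmem : 2 * m * p ^ (n - 1) ∈
        Set.ncard '' SF (ZMod p × (Fin (n - 1) → ZMod p)) 0 := ⟨B₀, hB₀mem, hB₀card⟩
    exact le_antisymm (csSup_le ⟨_, hmem⟩ hub) (le_csSup ⟨_, hub⟩ hmem)
  -- layers
  set L : ℕ → Set (Fin (n - 1) → ZMod p) := fun j => {v | ((j : ZMod p), v) ∈ A} with hLdef
  -- cast identities
  have hc11 : ((2 * m - 1 : ℕ) : ZMod p) + ((2 * m - 1 : ℕ) : ZMod p)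
      = ((4 * m - 2 : ℕ) : ZMod p) := by
    rw [← Nat.cast_add]; congr 1; omega
  have hc12 : ((2 * m - 1 : ℕ) : ZMod p) + ((2 * m : ℕ) : ZMod p)
      = ((4 * m - 1 : ℕ) : ZMod p) := by
    rw [← Nat.cast_add]; congr 1; omega
  have hc44 : ((4 * m - 1 : ℕ) : ZMod p) + ((4 * m - 1 : ℕ) : ZMod p)
      = ((2 * m - 1 : ℕ) : ZMod p) := by
    rw [← Nat.cast_add, show (4 * m - 1) + (4 * m - 1) = (2 * m - 1) + p by omega,
      Nat.cast_add, ZMod.natCast_self, add_zero]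
  -- the three sum-free constraints
  have hC1 : ∀ u ∈ L (2 * m - 1), ∀ v ∈ L (2 * m - 1), u + v ∉ L (4 * m - 2) := by
    intro u hu v hv hz
    refine hA0 _ hu _ hv ?_
    have hmem : (((2 * m - 1 : ℕ) : ZMod p), u) + (((2 * m - 1 : ℕ) : ZMod p), v)
        = (((4 * m - 2 : ℕ) : ZMod p), u + v) := by rw [Prod.mk_add_mk, hc11]
    rw [hmem]; exact hz
  have hC2 : ∀ u ∈ L (2 * m - 1), ∀ v ∈ L (2 * m), u + v ∉ L (4 * m - 1) := by
    intro u hu v hv hz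
    refine hA0 _ hu _ hv ?_
    have hmem : (((2 * m - 1 : ℕ) : ZMod p), u) + (((2 * m : ℕ) : ZMod p), v)
        = (((4 * m - 1 : ℕ) : ZMod p), u + v) := by rw [Prod.mk_add_mk, hc12]
    rw [hmem]; exact hz
  have hC3 : ∀ u ∈ L (4 * m - 1), ∀ v ∈ L (4 * m - 1), u + v ∉ L (2 * m - 1) := by
    intro u hu v hv hz
    refine hA0 _ hu _ hv ?_
    have hmem : (((4 * m - 1 : ℕ) : ZMod p), u) + (((4 * m - 1 : ℕ) : ZMod p), v)
        = (((2 * m - 1 : ℕ) : ZMod p), u + v) := by rw [Prod.mk_add_mk, hc44]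
    rw [hmem]; exact hz
  -- covering and counting
  have hmemL : ∀ (j : ℕ) (g : ZMod p × (Fin (n - 1) → ZMod p)),
      (j : ZMod p) = g.1 → (g ∈ A ↔ g.2 ∈ L j) := by
    intro j g hj
    have hg : ((j : ZMod p), g.2) = g := Prod.ext hj rfl
    constructor
    · intro h; show ((j : ZMod p), g.2) ∈ A; rw [hg]; exact h
    · intro h; have h2 : ((j : ZMod p), g.2) ∈ A := h; rwa [hg] at h2
  have hcover : A ⊆ ⋃ j ∈ Finset.Icc (2 * m - 1) (4 * m - 1),
      ({((j : ℕ) : ZMod p)} ×ˢ L j) := by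
    intro g hg
    obtain ⟨j, hj, hjg⟩ := (hsub hg).1
    rw [Set.mem_Icc] at hj
    exact Set.mem_biUnion (Finset.mem_Icc.mpr hj)
      ⟨hjg.symm, (hmemL j g hjg).mp hg⟩
  have hsum0 : A.ncard ≤ ∑ j ∈ Finset.Icc (2 * m - 1) (4 * m - 1), (L j).ncard := by
    calc A.ncard ≤ (⋃ j ∈ Finset.Icc (2 * m - 1) (4 * m - 1),
        ({((j : ℕ) : ZMod p)} ×ˢ L j)).ncard :=
          Set.ncard_le_ncard hcover (Set.toFinite _)
      _ ≤ ∑ j ∈ Finset.Icc (2 * m - 1) (4 * m - 1), ({((j : ℕ) : ZMod p)} ×ˢ L j).ncard :=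
          ncard_biUnion_le' _ _
      _ = ∑ j ∈ Finset.Icc (2 * m - 1) (4 * m - 1), (L j).ncard :=
          Finset.sum_congr rfl (fun j _ => ncard_singleton_prod' _ _)
  have hsplit : ∑ j ∈ Finset.Icc (2 * m - 1) (4 * m - 1), (L j).ncard
      = (L (2 * m - 1)).ncard + (L (2 * m)).ncard
        + (∑ j ∈ Finset.Icc (2 * m + 1) (4 * m - 3), (L j).ncard)
        + (L (4 * m - 2)).ncard + (L (4 * m - 1)).ncard := by
    have h1 : Finset.Icc (2 * m - 1) (4 * m - 1)
        = insert (2 * m - 1) (insert (2 * m) (insert (4 * m - 2) (insert (4 * m - 1)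
            (Finset.Icc (2 * m + 1) (4 * m - 3))))) := by
      ext j
      simp only [Finset.mem_Icc, Finset.mem_insert]
      omega
    rw [h1]
    rw [Finset.sum_insert (by simp only [Finset.mem_insert, Finset.mem_Icc]; omega)]
    rw [Finset.sum_insert (by simp only [Finset.mem_insert, Finset.mem_Icc]; omega)]
    rw [Finset.sum_insert (by simp only [Finset.mem_insert, Finset.mem_Icc]; omega)]
    rw [Finset.sum_insert (by simp only [Finset.mem_Icc]; omega)]
    ring
  have hmidle : ∑ j ∈ Finset.Icc (2 * m + 1) (4 * m - 3), (L j).ncard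
      ≤ (2 * m - 3) * p ^ (n - 1) := by
    calc ∑ j ∈ Finset.Icc (2 * m + 1) (4 * m - 3), (L j).ncard
        ≤ ∑ _j ∈ Finset.Icc (2 * m + 1) (4 * m - 3), p ^ (n - 1) :=
          Finset.sum_le_sum (fun j _ => by
            rw [← hNV]; exact Set.ncard_le_ncard (Set.subset_univ _) (Set.toFinite _))
      _ = (4 * m - 3 + 1 - (2 * m + 1)) * p ^ (n - 1) := by
          rw [Finset.sum_const, Nat.card_Icc, smul_eq_mul]
      _ = (2 * m - 3) * p ^ (n - 1) := by congr 1; omega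
  -- X is nonempty
  have hXne : (L (2 * m - 1)).Nonempty := by
    rw [Set.nonempty_iff_ne_empty]
    intro hXe
    apply hAmax
    refine ⟨B₀, hB₀mem, by rw [hB₀card, hsf0], ?_⟩
    intro g hg
    obtain ⟨j, hj, hjg⟩ := (hsub hg).1
    rw [Set.mem_Icc] at hj
    have hjne : j ≠ 2 * m - 1 := by
      intro hje
      have h2 : g.2 ∈ L (2 * m - 1) := (hmemL (2 * m - 1) g (hje ▸ hjg)).mp hg
      rw [hXe] at h2
      exact h2
    exact ⟨⟨j, Set.mem_Icc.mpr ⟨by omega, hj.2⟩, hjg⟩, trivial⟩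
  obtain ⟨x₀, hx₀⟩ := hXne
  -- the two pair inequalities
  have hxz : (L (2 * m - 1)).ncard + (L (4 * m - 2)).ncard ≤ p ^ (n - 1) := by
    have hdisj : Disjoint ((x₀ + ·) '' L (2 * m - 1)) (L (4 * m - 2)) := by
      rw [Set.disjoint_left]
      rintro v ⟨u, hu, rfl⟩ hvZ
      exact hC1 x₀ hx₀ u hu hvZ
    calc (L (2 * m - 1)).ncard + (L (4 * m - 2)).ncard
        = ((x₀ + ·) '' L (2 * m - 1)).ncard + (L (4 * m - 2)).ncard := by
          rw [Set.ncard_image_of_injective _ (add_right_injective x₀)]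
      _ = (((x₀ + ·) '' L (2 * m - 1)) ∪ L (4 * m - 2)).ncard :=
          (Set.ncard_union_eq hdisj (Set.toFinite _) (Set.toFinite _)).symm
      _ ≤ p ^ (n - 1) := by
          rw [← hNV]; exact Set.ncard_le_ncard (Set.subset_univ _) (Set.toFinite _)
  have hyw : (L (2 * m)).ncard + (L (4 * m - 1)).ncard ≤ p ^ (n - 1) := by
    have hdisj : Disjoint ((x₀ + ·) '' L (2 * m)) (L (4 * m - 1)) := by
      rw [Set.disjoint_left]
      rintro v ⟨u, hu, rfl⟩ hvW
      exact hC2 x₀ hx₀ u hu hvW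
    calc (L (2 * m)).ncard + (L (4 * m - 1)).ncard
        = ((x₀ + ·) '' L (2 * m)).ncard + (L (4 * m - 1)).ncard := by
          rw [Set.ncard_image_of_injective _ (add_right_injective x₀)]
      _ = (((x₀ + ·) '' L (2 * m)) ∪ L (4 * m - 1)).ncard :=
          (Set.ncard_union_eq hdisj (Set.toFinite _) (Set.toFinite _)).symm
      _ ≤ p ^ (n - 1) := by
          rw [← hNV]; exact Set.ncard_le_ncard (Set.subset_univ _) (Set.toFinite _)
  -- extract equalities
  obtain ⟨Q, hQ⟩ : ∃ Q, (2 * m - 3) * p ^ (n - 1) = Q := ⟨_, rfl⟩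
  obtain ⟨N, hN⟩ : ∃ N, p ^ (n - 1) = N := ⟨_, rfl⟩
  have hQ2 : (2 * m - 1) * p ^ (n - 1) = Q + N + N := by
    rw [← hQ, ← hN, show 2 * m - 1 = (2 * m - 3) + 2 by omega]
    ring
  have hmidle' : ∑ j ∈ Finset.Icc (2 * m + 1) (4 * m - 3), (L j).ncard ≤ Q := hQ ▸ hmidle
  have hcard' : Q + N + N ≤ A.ncard := hQ2 ▸ hcard
  have heqXZ : (L (2 * m - 1)).ncard + (L (4 * m - 2)).ncard = N := by omega
  have heqYW : (L (2 * m)).ncard + (L (4 * m - 1)).ncard = N := by omega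
  have hSeq : ∑ j ∈ Finset.Icc (2 * m + 1) (4 * m - 3), (L j).ncard = Q := by omega
  have hmidfull : ∀ j ∈ Finset.Icc (2 * m + 1) (4 * m - 3), L j = Set.univ := by
    intro j hj
    have hjN : p ^ (n - 1) ≤ (L j).ncard := by
      by_contra hcon
      push_neg at hcon
      have hlt : ∑ j' ∈ Finset.Icc (2 * m + 1) (4 * m - 3), (L j').ncard
          < ∑ _j' ∈ Finset.Icc (2 * m + 1) (4 * m - 3), p ^ (n - 1) :=
        Finset.sum_lt_sum
          (fun i _ => by rw [← hNV]; exact Set.ncard_le_ncard (Set.subset_univ _) (Set.toFinite _))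
          ⟨j, hj, hcon⟩
      rw [Finset.sum_const, Nat.card_Icc, smul_eq_mul] at hlt
      have h4 : (4 * m - 3 + 1 - (2 * m + 1)) * p ^ (n - 1) = Q := by
        rw [← hQ]; congr 1; omega
      omega
    exact Set.eq_of_subset_of_ncard_le (Set.subset_univ _)
      (by rw [hNV]; exact hjN) (Set.toFinite _)
  -- transfer equalities
  have htransX : ∀ u ∈ L (2 * m - 1),
      (u + ·) '' L (2 * m - 1) = Set.univ \ L (4 * m - 2) := by
    intro u hu
    refine Set.eq_of_subset_of_ncard_le ?_ ?_ (Set.toFinite _)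
    · rintro v ⟨w, hw, rfl⟩
      exact ⟨trivial, fun hvZ => hC1 u hu w hw hvZ⟩
    · rw [Set.ncard_diff (Set.subset_univ _), hNV,
        Set.ncard_image_of_injective _ (add_right_injective u)]
      omega
  have htransY : ∀ u ∈ L (2 * m - 1),
      (u + ·) '' L (2 * m) = Set.univ \ L (4 * m - 1) := by
    intro u hu
    refine Set.eq_of_subset_of_ncard_le ?_ ?_ (Set.toFinite _)
    · rintro v ⟨w, hw, rfl⟩
      exact ⟨trivial, fun hvW => hC2 u hu w hw hvW⟩
    · rw [Set.ncard_diff (Set.subset_univ _), hNV,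
        Set.ncard_image_of_injective _ (add_right_injective u)]
      omega
  -- translation step lemmas
  have hstepX : ∀ u ∈ L (2 * m - 1), ∀ u' ∈ L (2 * m - 1), ∀ v ∈ L (2 * m - 1),
      v + u' - u ∈ L (2 * m - 1) := by
    intro u hu u' hu' v hv
    have h1 : u' + v ∈ (u + ·) '' L (2 * m - 1) := by
      rw [htransX u hu, ← htransX u' hu']
      exact ⟨v, hv, rfl⟩
    obtain ⟨w, hw, hww⟩ := h1
    simp only [] at hww
    have hw2 : w = v + u' - u := by
      rw [eq_sub_iff_add_eq, add_comm w u, hww]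
      abel
    exact hw2 ▸ hw
  have hstepY : ∀ u ∈ L (2 * m - 1), ∀ u' ∈ L (2 * m - 1), ∀ v ∈ L (2 * m),
      v + u' - u ∈ L (2 * m) := by
    intro u hu u' hu' v hv
    have h1 : u' + v ∈ (u + ·) '' L (2 * m) := by
      rw [htransY u hu, ← htransY u' hu']
      exact ⟨v, hv, rfl⟩
    obtain ⟨w, hw, hww⟩ := h1
    simp only [] at hww
    have hw2 : w = v + u' - u := by
      rw [eq_sub_iff_add_eq, add_comm w u, hww]
      abel
    exact hw2 ▸ hw
  -- the stabiliser subgroup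
  set HS : AddSubgroup (Fin (n - 1) → ZMod p) :=
    { carrier := {h | x₀ + h ∈ L (2 * m - 1)}
      zero_mem' := by simpa using hx₀
      add_mem' := by
        intro h₁ h₂ m₁ m₂
        have h3 := hstepX x₀ hx₀ (x₀ + h₁) m₁ (x₀ + h₂) m₂
        have heq : x₀ + h₂ + (x₀ + h₁) - x₀ = x₀ + (h₁ + h₂) := by abel
        show x₀ + (h₁ + h₂) ∈ L (2 * m - 1)
        exact heq ▸ h3
      neg_mem' := by
        intro h mh
        have h3 := hstepX (x₀ + h) mh x₀ hx₀ x₀ hx₀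
        have heq : x₀ + x₀ - (x₀ + h) = x₀ + -h := by abel
        show x₀ + -h ∈ L (2 * m - 1)
        exact heq ▸ h3 } with hHSdef
  have hHSmem : ∀ h, h ∈ HS ↔ x₀ + h ∈ L (2 * m - 1) := fun h => Iff.rfl
  have hXcoset : ∀ v, v ∈ L (2 * m - 1) ↔ v - x₀ ∈ HS := by
    intro v
    rw [hHSmem]
    constructor <;> intro h2
    · rwa [show x₀ + (v - x₀) = v by abel]
    · rwa [show x₀ + (v - x₀) = v by abel] at h2
  have hYper : ∀ h ∈ HS, ∀ v, v + h ∈ L (2 * m) ↔ v ∈ L (2 * m) := by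
    intro h hh v
    have hxh : x₀ + h ∈ L (2 * m - 1) := hh
    constructor
    · intro hvh
      have h3 := hstepY (x₀ + h) hxh x₀ hx₀ (v + h) hvh
      have heq : v + h + x₀ - (x₀ + h) = v := by abel
      exact heq ▸ h3
    · intro hv
      have h3 := hstepY x₀ hx₀ (x₀ + h) hxh v hv
      have heq : v + (x₀ + h) - x₀ = v + h := by abel
      exact heq ▸ h3
  have hZeq : L (4 * m - 2) = ((x₀ + ·) '' L (2 * m - 1))ᶜ := by
    rw [Set.compl_eq_univ_diff, htransX x₀ hx₀,
      Set.diff_diff_cancel_left (Set.subset_univ _)]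
  have hWeq : L (4 * m - 1) = ((x₀ + ·) '' L (2 * m))ᶜ := by
    rw [Set.compl_eq_univ_diff, htransY x₀ hx₀,
      Set.diff_diff_cancel_left (Set.subset_univ _)]
  -- the scaling vector
  have h2m1ne : ((2 * m - 1 : ℕ) : ZMod p) ≠ 0 := by
    intro h
    have h2 := (ZMod.natCast_eq_zero_iff _ _).mp h
    have h3 := Nat.le_of_dvd (by omega) h2
    omega
  set sv : Fin (n - 1) → ZMod p := ((2 * m - 1 : ℕ) : ZMod p)⁻¹ • x₀ with hsvdef
  have hs1 : ((2 * m - 1 : ℕ) : ZMod p) • sv = x₀ := by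
    rw [hsvdef, smul_smul, mul_inv_cancel₀ h2m1ne, one_smul]
  have hs3 : ((4 * m - 2 : ℕ) : ZMod p) • sv = x₀ + x₀ := by
    rw [← hc11, add_smul, hs1]
  have hs4 : ((4 * m - 1 : ℕ) : ZMod p) • sv = x₀ + ((2 * m : ℕ) : ZMod p) • sv := by
    rw [← hc12, add_smul, hs1]
  have hs44 : ((4 * m - 1 : ℕ) : ZMod p) • sv + ((4 * m - 1 : ℕ) : ZMod p) • sv = x₀ := by
    rw [← add_smul, hc44, hs1]
  set PV : Set (Fin (n - 1) → ZMod p) :=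
    (fun v => v - ((4 * m - 1 : ℕ) : ZMod p) • sv) '' L (4 * m - 1) with hPVdef
  -- image computations inside the fibre group
  have hsubbij : ∀ a : Fin (n - 1) → ZMod p, Function.Bijective (fun v => v - a) :=
    fun a => ⟨sub_left_injective, fun v => ⟨v + a, add_sub_cancel_right v a⟩⟩
  have himage_compl : ∀ (a : Fin (n - 1) → ZMod p) (S : Set (Fin (n - 1) → ZMod p)),
      (fun v => v - a) '' Sᶜ = ((fun v => v - a) '' S)ᶜ :=
    fun a S => Set.image_compl_eq (hsubbij a)
  have hf1' : (fun v => v - x₀) '' L (2 * m - 1)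
      = (HS : Set (Fin (n - 1) → ZMod p)) := by
    ext h
    constructor
    · rintro ⟨v, hv, rfl⟩
      exact (hXcoset v).mp hv
    · intro hh
      refine ⟨x₀ + h, (hXcoset _).mpr ?_, ?_⟩
      · rwa [show x₀ + h - x₀ = h by abel]
      · show x₀ + h - x₀ = h
        abel
  have hf1 : (fun v => v - ((2 * m - 1 : ℕ) : ZMod p) • sv) '' L (2 * m - 1)
      = (HS : Set (Fin (n - 1) → ZMod p)) := by
    rw [hs1]; exact hf1'
  have hf4 : (fun v => v - ((4 * m - 2 : ℕ) : ZMod p) • sv) '' L (4 * m - 2)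
      = (HS : Set (Fin (n - 1) → ZMod p))ᶜ := by
    rw [hs3, hZeq, himage_compl]
    rw [← hf1']
    congr 1
    simp only [Set.image_image]
    apply Set.image_congr'
    intro v
    abel
  have hWeq' : ∀ v, v ∈ L (4 * m - 1) ↔ v - x₀ ∉ L (2 * m) := by
    intro v
    rw [hWeq]
    constructor
    · intro h hcon
      exact h ⟨v - x₀, hcon, show x₀ + (v - x₀) = v by abel⟩
    · rintro h ⟨u, hu, rfl⟩
      exact h (show x₀ + u - x₀ ∈ L (2 * m) by rwa [show x₀ + u - x₀ = u by abel])
  have hf2 : (fun v => v - ((2 * m : ℕ) : ZMod p) • sv) '' L (2 * m) = PVᶜ := by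
    ext v
    constructor
    · rintro ⟨u, hu, rfl⟩ hvPV
      obtain ⟨w, hw, hww⟩ := hvPV
      simp only [] at hww
      have hwu : w = x₀ + u := by
        have h5 : w = u - ((2 * m : ℕ) : ZMod p) • sv + ((4 * m - 1 : ℕ) : ZMod p) • sv := by
          rw [← hww]; abel
        rw [h5, hs4]; abel
      have h6 := (hWeq' w).mp hw
      rw [hwu, show x₀ + u - x₀ = u by abel] at h6
      exact h6 hu
    · intro hv
      refine ⟨v + ((2 * m : ℕ) : ZMod p) • sv, ?_,
        show v + ((2 * m : ℕ) : ZMod p) • sv - ((2 * m : ℕ) : ZMod p) • sv = v by abel⟩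
      by_contra hu
      have hw : x₀ + (v + ((2 * m : ℕ) : ZMod p) • sv) ∈ L (4 * m - 1) := by
        rw [hWeq]
        rintro ⟨u', hu', huu⟩
        exact hu ((add_left_cancel huu) ▸ hu')
      apply hv
      refine ⟨x₀ + (v + ((2 * m : ℕ) : ZMod p) • sv), hw, ?_⟩
      show x₀ + (v + ((2 * m : ℕ) : ZMod p) • sv) - ((4 * m - 1 : ℕ) : ZMod p) • sv = v
      rw [hs4]
      abel
  -- periodicity
  have hWper : ∀ h ∈ HS, ∀ w, w ∈ L (4 * m - 1) → w + h ∈ L (4 * m - 1) := by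
    intro h hh w hw
    rw [hWeq] at hw ⊢
    rintro ⟨u, hu, huu⟩
    simp only [] at huu
    apply hw
    refine ⟨u - h, (hYper h hh (u - h)).mp (by rwa [show u - h + h = u by abel]), ?_⟩
    show x₀ + (u - h) = w
    rw [show x₀ + (u - h) = x₀ + u - h by abel, huu]
    abel
  have hPVper : ∀ h ∈ HS, ∀ v, v ∈ PV → v + h ∈ PV := by
    intro h hh v hv
    obtain ⟨w, hw, rfl⟩ := hv
    refine ⟨w + h, hWper h hh w hw, ?_⟩
    show w + h - ((4 * m - 1 : ℕ) : ZMod p) • sv = w - ((4 * m - 1 : ℕ) : ZMod p) • sv + h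
    abel
  have hPPHS : ∀ v₁ ∈ PV, ∀ v₂ ∈ PV, v₁ + v₂ ∉ (HS : Set (Fin (n - 1) → ZMod p)) := by
    rintro v₁ ⟨w₁, hw₁, rfl⟩ v₂ ⟨w₂, hw₂, rfl⟩ hmem
    have h6 := (hHSmem _).mp hmem
    simp only [] at h6
    have h5 : x₀ + (w₁ - ((4 * m - 1 : ℕ) : ZMod p) • sv
        + (w₂ - ((4 * m - 1 : ℕ) : ZMod p) • sv)) = w₁ + w₂ := by
      rw [← hs44]; abel
    rw [h5] at h6
    exact hC3 w₁ hw₁ w₂ hw₂ h6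
  -- the stabiliser as submodule
  set HM : Submodule (ZMod p) (Fin (n - 1) → ZMod p) :=
    { carrier := (HS : Set (Fin (n - 1) → ZMod p))
      add_mem' := fun ha hb => HS.add_mem ha hb
      zero_mem' := HS.zero_mem
      smul_mem' := by
        intro c v hv
        have h1 : (c.val : ZMod p) • v = c.val • v := Nat.cast_smul_eq_nsmul _ _ _
        have h2 : (c.val : ZMod p) = c := by rw [ZMod.natCast_val, ZMod.cast_id]
        rw [← h2, h1]
        exact AddSubgroup.nsmul_mem HS hv c.val } with hHMdef
  have hfinrankV : Module.finrank (ZMod p) (Fin (n - 1) → ZMod p) = n - 1 := by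
    rw [Module.finrank_pi, Fintype.card_fin]
  obtain ⟨r, hr⟩ : ∃ r, Module.finrank (ZMod p) HM = r := ⟨_, rfl⟩
  have hrle : r ≤ n - 1 := by
    have h2 := Submodule.finrank_le HM
    rw [hfinrankV, hr] at h2
    exact h2
  obtain ⟨l, hl⟩ : ∃ l, n - r = l := ⟨_, rfl⟩
  have hl1 : 1 ≤ l := by omega
  have hln : l ≤ n := by omega
  have hnl : n - l = r := by omega
  obtain ⟨Qc, hQc⟩ := Submodule.exists_isCompl HM
  have hfrQ : Module.finrank (ZMod p) Qc = l - 1 := by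
    have h2 := Submodule.finrank_add_eq_of_isCompl hQc
    rw [hfinrankV, hr] at h2
    omega
  have hfrH : Module.finrank (ZMod p) HM = n - l := by omega
  set eQ : Qc ≃ₗ[ZMod p] (Fin (l - 1) → ZMod p) :=
    (Module.finBasis (ZMod p) Qc).equivFun.trans
      (LinearEquiv.funCongrLeft (ZMod p) (ZMod p) (finCongr hfrQ.symm)) with heQdef
  set eH : HM ≃ₗ[ZMod p] (Fin (n - l) → ZMod p) :=
    (Module.finBasis (ZMod p) HM).equivFun.trans
      (LinearEquiv.funCongrLeft (ZMod p) (ZMod p) (finCongr hfrH.symm)) with heHdef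
  set T : (Fin (n - 1) → ZMod p) ≃ₗ[ZMod p]
      (Fin (l - 1) → ZMod p) × (Fin (n - l) → ZMod p) :=
    (Submodule.prodEquivOfIsCompl Qc HM hQc.symm).symm.trans (eQ.prodCongr eH) with hTdef
  have hT0 : ∀ (a : Qc) (b : HM),
      T ((a : Fin (n - 1) → ZMod p) + (b : Fin (n - 1) → ZMod p)) = (eQ a, eH b) := by
    intro a b
    rw [hTdef, LinearEquiv.trans_apply]
    have h2 : (Submodule.prodEquivOfIsCompl Qc HM hQc.symm).symm
        ((a : Fin (n - 1) → ZMod p) + (b : Fin (n - 1) → ZMod p)) = (a, b) := by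
      rw [LinearEquiv.symm_apply_eq, Submodule.coe_prodEquivOfIsCompl']
    rw [h2, LinearEquiv.prodCongr_apply]
  have hTH : ⇑T '' (HS : Set (Fin (n - 1) → ZMod p))
      = ({0} : Set (Fin (l - 1) → ZMod p)) ×ˢ (Set.univ : Set (Fin (n - l) → ZMod p)) := by
    ext x
    constructor
    · rintro ⟨h, hh, rfl⟩
      have hb : h = ((0 : Qc) : Fin (n - 1) → ZMod p) + ((⟨h, hh⟩ : HM) : Fin (n - 1) → ZMod p) := by
        rw [ZeroMemClass.coe_zero, zero_add]
      rw [hb, hT0]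
      refine ⟨?_, trivial⟩
      show eQ 0 ∈ ({0} : Set (Fin (l - 1) → ZMod p))
      rw [map_zero]
      rfl
    · rintro ⟨hx1, -⟩
      refine ⟨((eH.symm x.2 : HM) : Fin (n - 1) → ZMod p), (eH.symm x.2).2, ?_⟩
      have h7 : ((eH.symm x.2 : HM) : Fin (n - 1) → ZMod p)
          = ((0 : Qc) : Fin (n - 1) → ZMod p) + ((eH.symm x.2 : HM) : Fin (n - 1) → ZMod p) := by
        rw [ZeroMemClass.coe_zero, zero_add]
      rw [h7, hT0, map_zero, LinearEquiv.apply_symm_apply]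
      exact Prod.ext (Set.eq_of_mem_singleton hx1).symm rfl
  set P1 : Set (Fin (l - 1) → ZMod p) := Prod.fst '' (⇑T '' PV) with hP1def
  have hTP : ⇑T '' PV = P1 ×ˢ (Set.univ : Set (Fin (n - l) → ZMod p)) := by
    apply Set.Subset.antisymm
    · rintro x ⟨v, hv, rfl⟩
      exact ⟨⟨T v, ⟨v, hv, rfl⟩, rfl⟩, trivial⟩
    · rintro x ⟨⟨y, ⟨v, hv, rfl⟩, hyx⟩, -⟩
      have hh : ((eH.symm (x.2 - (T v).2) : HM) : Fin (n - 1) → ZMod p)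
          ∈ (HS : Set (Fin (n - 1) → ZMod p)) := (eH.symm (x.2 - (T v).2)).2
      refine ⟨v + ((eH.symm (x.2 - (T v).2) : HM) : Fin (n - 1) → ZMod p),
        hPVper _ hh v hv, ?_⟩
      rw [map_add]
      have h7 : ((eH.symm (x.2 - (T v).2) : HM) : Fin (n - 1) → ZMod p)
          = ((0 : Qc) : Fin (n - 1) → ZMod p)
            + ((eH.symm (x.2 - (T v).2) : HM) : Fin (n - 1) → ZMod p) := by
        rw [ZeroMemClass.coe_zero, zero_add]
      rw [h7, hT0, map_zero, LinearEquiv.apply_symm_apply]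
      refine Prod.ext ?_ ?_
      · show (T v).1 + 0 = x.1
        rw [add_zero]
        exact hyx
      · show (T v).2 + (x.2 - (T v).2) = x.2
        abel
  have hTcompl : ∀ S : Set (Fin (n - 1) → ZMod p), ⇑T '' Sᶜ = (⇑T '' S)ᶜ :=
    fun S => Set.image_compl_eq T.bijective
  have hcomplprod : ∀ S : Set (Fin (l - 1) → ZMod p),
      (S ×ˢ (Set.univ : Set (Fin (n - l) → ZMod p)))ᶜ = Sᶜ ×ˢ Set.univ := by
    intro S
    ext x
    simp [Set.mem_prod]
  have hTHc : ⇑T '' (HS : Set (Fin (n - 1) → ZMod p))ᶜ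
      = ({0} : Set (Fin (l - 1) → ZMod p))ᶜ ×ˢ (Set.univ : Set (Fin (n - l) → ZMod p)) := by
    rw [hTcompl, hTH, hcomplprod]
  have hTPc : ⇑T '' PVᶜ = P1ᶜ ×ˢ (Set.univ : Set (Fin (n - l) → ZMod p)) := by
    rw [hTcompl, hTP, hcomplprod]
  have hTuniv : ⇑T '' (Set.univ : Set (Fin (n - 1) → ZMod p)) = Set.univ := by
    rw [Set.image_univ]
    exact T.surjective.range_eq
  have h0P1 : (0 : Fin (l - 1) → ZMod p) ∉ P1 + P1 := by
    intro h0
    rw [Set.mem_add] at h0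
    obtain ⟨r₁, hr₁, r₂, hr₂, hsum12⟩ := h0
    have h1 : ((r₁, (0 : Fin (n - l) → ZMod p)) : _) ∈ ⇑T '' PV := by
      rw [hTP]; exact ⟨hr₁, trivial⟩
    have h2 : ((r₂, (0 : Fin (n - l) → ZMod p)) : _) ∈ ⇑T '' PV := by
      rw [hTP]; exact ⟨hr₂, trivial⟩
    obtain ⟨v₁, hv₁, hTv₁⟩ := h1
    obtain ⟨v₂, hv₂, hTv₂⟩ := h2
    have h3 : T (v₁ + v₂) = ((0 : Fin (l - 1) → ZMod p), (0 : Fin (n - l) → ZMod p)) := by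
      rw [map_add, hTv₁, hTv₂, Prod.mk_add_mk, hsum12, add_zero]
    have h4 : (((0 : Fin (l - 1) → ZMod p), (0 : Fin (n - l) → ZMod p)) : _)
        ∈ ⇑T '' (HS : Set (Fin (n - 1) → ZMod p)) := by
      rw [hTH]; exact ⟨rfl, trivial⟩
    obtain ⟨h, hh, hTh⟩ := h4
    have h5 : v₁ + v₂ = h := T.injective (by rw [h3, hTh])
    exact hPPHS v₁ hv₁ v₂ hv₂ (h5 ▸ hh)
  -- the equivalence for the first factor
  have hl1add : 1 + (l - 1) = l := by omega
  set gE : (Fin l → ZMod p) ≃+ (ZMod p × (Fin (l - 1) → ZMod p)) :=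
    ((LinearEquiv.funCongrLeft (ZMod p) (ZMod p)
        ((finSumFinEquiv (m := 1) (n := l - 1)).trans (finCongr hl1add))).trans
      ((LinearEquiv.sumArrowLequivProdArrow (Fin 1) (Fin (l - 1)) (ZMod p) (ZMod p)).trans
        ((LinearEquiv.funUnique (Fin 1) (ZMod p) (ZMod p)).prodCongr
          (LinearEquiv.refl (ZMod p) (Fin (l - 1) → ZMod p))))).toAddEquiv with hgEdef
  set B : Set (Fin l → ZMod p) := ⇑gE.symm '' (VSModel p m (l - 1) P1) with hBdef
  have hgB : ⇑gE '' B = VSModel p m (l - 1) P1 := by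
    rw [hBdef, Set.image_image]
    simp only [AddEquiv.apply_symm_apply]
    exact Set.image_id _
  -- decomposition of A
  have hAdec : A = {((2 * m - 1 : ℕ) : ZMod p)} ×ˢ L (2 * m - 1)
      ∪ {((2 * m : ℕ) : ZMod p)} ×ˢ L (2 * m)
      ∪ Ival p (2 * m + 1) (4 * m - 3) ×ˢ Set.univ
      ∪ {((4 * m - 2 : ℕ) : ZMod p)} ×ˢ L (4 * m - 2)
      ∪ {((4 * m - 1 : ℕ) : ZMod p)} ×ˢ L (4 * m - 1) := by
    apply Set.Subset.antisymm
    · intro g hg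
      obtain ⟨j, hj, hjg⟩ := (hsub hg).1
      rw [Set.mem_Icc] at hj
      have h5 : j = 2 * m - 1 ∨ j = 2 * m ∨ (2 * m + 1 ≤ j ∧ j ≤ 4 * m - 3)
          ∨ j = 4 * m - 2 ∨ j = 4 * m - 1 := by omega
      rcases h5 with h5 | h5 | h5 | h5 | h5
      · subst h5; exact Or.inl (Or.inl (Or.inl (Or.inl ⟨hjg.symm, (hmemL _ g hjg).mp hg⟩)))
      · subst h5; exact Or.inl (Or.inl (Or.inl (Or.inr ⟨hjg.symm, (hmemL _ g hjg).mp hg⟩)))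
      · exact Or.inl (Or.inl (Or.inr ⟨⟨j, Set.mem_Icc.mpr h5, hjg⟩, trivial⟩))
      · subst h5; exact Or.inl (Or.inr ⟨hjg.symm, (hmemL _ g hjg).mp hg⟩)
      · subst h5; exact Or.inr ⟨hjg.symm, (hmemL _ g hjg).mp hg⟩
    · intro g hg
      rcases hg with ((((⟨h1, h2⟩ | ⟨h1, h2⟩) | ⟨⟨j, hj, hjg⟩, -⟩) | ⟨h1, h2⟩) | ⟨h1, h2⟩)
      · exact (hmemL _ g h1.symm).mpr h2
      · exact (hmemL _ g h1.symm).mpr h2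
      · refine (hmemL j g hjg).mpr ?_
        rw [hmidfull j (Finset.mem_Icc.mpr (Set.mem_Icc.mp hj))]
        trivial
      · exact (hmemL _ g h1.symm).mpr h2
      · exact (hmemL _ g h1.symm).mpr h2
  -- image under the shear
  have himg1 : ⇑(shearEquiv sv) '' A
      = {((2 * m - 1 : ℕ) : ZMod p)} ×ˢ (HS : Set (Fin (n - 1) → ZMod p))
      ∪ {((2 * m : ℕ) : ZMod p)} ×ˢ PVᶜ
      ∪ Ival p (2 * m + 1) (4 * m - 3) ×ˢ Set.univ
      ∪ {((4 * m - 2 : ℕ) : ZMod p)} ×ˢ (HS : Set (Fin (n - 1) → ZMod p))ᶜ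
      ∪ {((4 * m - 1 : ℕ) : ZMod p)} ×ˢ PV := by
    rw [hAdec, Set.image_union, Set.image_union, Set.image_union, Set.image_union,
      shearEquiv_image_singleton, shearEquiv_image_singleton, shearEquiv_image_full,
      shearEquiv_image_singleton, shearEquiv_image_singleton, hf1, hf2, hf4, ← hPVdef]
  -- image under id × T
  have hψ : ∀ (Sk : Set (ZMod p)) (Sv : Set (Fin (n - 1) → ZMod p)),
      ⇑(AddEquiv.prodCongr (AddEquiv.refl (ZMod p)) T.toAddEquiv) '' (Sk ×ˢ Sv)
        = Sk ×ˢ (⇑T '' Sv) := by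
    intro Sk Sv
    rw [prodCongr_image_prod', AddEquiv.coe_refl, Set.image_id]
    rfl
  have himg2 : ⇑(AddEquiv.prodCongr (AddEquiv.refl (ZMod p)) T.toAddEquiv)
        '' (⇑(shearEquiv sv) '' A)
      = {((2 * m - 1 : ℕ) : ZMod p)} ×ˢ
          (({0} : Set (Fin (l - 1) → ZMod p)) ×ˢ (Set.univ : Set (Fin (n - l) → ZMod p)))
      ∪ {((2 * m : ℕ) : ZMod p)} ×ˢ (P1ᶜ ×ˢ (Set.univ : Set (Fin (n - l) → ZMod p)))
      ∪ Ival p (2 * m + 1) (4 * m - 3) ×ˢ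
          (Set.univ : Set ((Fin (l - 1) → ZMod p) × (Fin (n - l) → ZMod p)))
      ∪ {((4 * m - 2 : ℕ) : ZMod p)} ×ˢ
          (({0} : Set (Fin (l - 1) → ZMod p))ᶜ ×ˢ (Set.univ : Set (Fin (n - l) → ZMod p)))
      ∪ {((4 * m - 1 : ℕ) : ZMod p)} ×ˢ (P1 ×ˢ (Set.univ : Set (Fin (n - l) → ZMod p))) := by
    rw [himg1, Set.image_union, Set.image_union, Set.image_union, Set.image_union,
      hψ, hψ, hψ, hψ, hψ, hTH, hTPc, hTHc, hTP, hTuniv]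
  -- image under the associator
  have hα2 : ∀ (Sk : Set (ZMod p)) (S1 : Set (Fin (l - 1) → ZMod p))
      (S2 : Set (Fin (n - l) → ZMod p)),
      ⇑(AddEquiv.prodAssoc (M := ZMod p) (N := Fin (l - 1) → ZMod p)
          (P := Fin (n - l) → ZMod p)).symm '' (Sk ×ˢ (S1 ×ˢ S2)) = (Sk ×ˢ S1) ×ˢ S2 :=
    fun Sk S1 S2 => prodAssocSymm_image Sk S1 S2
  have hα2mid : ⇑(AddEquiv.prodAssoc (M := ZMod p) (N := Fin (l - 1) → ZMod p)
          (P := Fin (n - l) → ZMod p)).symm ''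
        (Ival p (2 * m + 1) (4 * m - 3) ×ˢ
          (Set.univ : Set ((Fin (l - 1) → ZMod p) × (Fin (n - l) → ZMod p))))
      = (Ival p (2 * m + 1) (4 * m - 3) ×ˢ (Set.univ : Set (Fin (l - 1) → ZMod p)))
          ×ˢ (Set.univ : Set (Fin (n - l) → ZMod p)) := by
    conv_lhs => rw [← Set.univ_prod_univ]
    exact hα2 _ _ _
  have himg3 : ⇑(AddEquiv.prodAssoc (M := ZMod p) (N := Fin (l - 1) → ZMod p)
          (P := Fin (n - l) → ZMod p)).symm ''
        (⇑(AddEquiv.prodCongr (AddEquiv.refl (ZMod p)) T.toAddEquiv)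
          '' (⇑(shearEquiv sv) '' A))
      = (VSModel p m (l - 1) P1) ×ˢ (Set.univ : Set (Fin (n - l) → ZMod p)) := by
    rw [himg2, Set.image_union, Set.image_union, Set.image_union, Set.image_union,
      hα2, hα2, hα2mid, hα2, hα2, VSModel,
      Set.union_prod, Set.union_prod, Set.union_prod, Set.union_prod,
      Set.singleton_prod_singleton]
  have himg4 : ⇑(AddEquiv.prodCongr gE.symm
        (AddEquiv.refl (Fin (n - l) → ZMod p)))
        '' ((VSModel p m (l - 1) P1) ×ˢ (Set.univ : Set (Fin (n - l) → ZMod p)))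
      = B ×ˢ (Set.univ : Set (Fin (n - l) → ZMod p)) := by
    rw [prodCongr_image_prod', AddEquiv.coe_refl, Set.image_id, ← hBdef]
  -- conclusion
  refine ⟨l, hl1, hln, B, ⟨P1, h0P1, gE, hgB⟩,
    (shearEquiv sv).trans ((AddEquiv.prodCongr (AddEquiv.refl (ZMod p)) T.toAddEquiv).trans
      ((AddEquiv.prodAssoc).symm.trans
        (AddEquiv.prodCongr gE.symm (AddEquiv.refl (Fin (n - l) → ZMod p))))), ?_⟩
  rw [AddEquiv.coe_trans, AddEquiv.coe_trans, AddEquiv.coe_trans,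
    Set.image_comp, Set.image_comp, Set.image_comp, himg3]
  exact himg4
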